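/- arXiv:2302.07386 — 4 statements merged into one kernel-verified Lean document; each statement's English description precedes it below -/
import Mathlib

section
/- Weak duality for the D-optimality continuous relaxation: if x is feasible for max{log det(A^T diag(x) A) : e^T x = s, l ≤ x ≤ u} with A^T diag(x) A ≻ 0, and (Λ, λ, θ, ν) satisfies Λ ≻ 0, λ ≥ 0, θ ≥ 0, and Λ • v_i v_i^T − λ_i + θ_i − ν = 0 for all i ∈ N, then log det(A^T diag(x) A) ≤ −log det Λ + λ^T u − θ^T l + ν s − m. -/
/-!
Write `B = Aᵀ diag(x) A = ∑ᵢ xᵢ vᵢ vᵢᵀ`. For positive definite `Λ` and `B`, the matrix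
`Λ^{1/2} B Λ^{1/2}` is positive definite with determinant `det Λ · det B` and trace `Λ • B`, so
`log t ≤ t - 1` applied to its eigenvalues gives `log det Λ + log det B ≤ Λ • B - m`. The dual
constraint turns `Λ • B` into `∑ᵢ xᵢ (λᵢ - θᵢ + ν)`, which the box and sum constraints on `x`
bound by `λᵀu - θᵀl + νs`.
-/

open scoped Matrix

namespace Matrix

variable {ι : Type*} [Fintype ι] [DecidableEq ι]

lemma PosDef.log_det_le_trace_sub_card {M : Matrix ι ι ℝ} (hM : M.PosDef) :
    Real.log M.det ≤ M.trace - Fintype.card ι := by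
  have hpos := hM.eigenvalues_pos
  rw [hM.isHermitian.det_eq_prod_eigenvalues, hM.isHermitian.trace_eq_sum_eigenvalues]
  simp only [RCLike.ofReal_real_eq_id, id]
  rw [Real.log_prod fun i _ => (hpos i).ne']
  calc ∑ i, Real.log (hM.isHermitian.eigenvalues i)
      ≤ ∑ i, (hM.isHermitian.eigenvalues i - 1) :=
        Finset.sum_le_sum fun i _ => Real.log_le_sub_one_of_pos (hpos i)
    _ = (∑ i, hM.isHermitian.eigenvalues i) - Fintype.card ι := by simp

open scoped MatrixOrder in
lemma PosDef.log_det_add_log_det_le_trace_mul_sub_card {L B : Matrix ι ι ℝ}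
    (hL : L.PosDef) (hB : B.PosDef) :
    Real.log L.det + Real.log B.det ≤ (L * B).trace - Fintype.card ι := by
  set S := CFC.sqrt L
  have hS : S.IsHermitian := (nonneg_iff_posSemidef.mp (CFC.sqrt_nonneg L)).isHermitian
  have hSS : S * S = L := CFC.sqrt_mul_sqrt_self L hL.posSemidef.nonneg
  have hdet : (S * B * S).det = L.det * B.det := by
    rw [det_mul, det_mul, mul_right_comm, ← det_mul, hSS]
  have hSBS : (S * B * S).PosDef := by
    have hpsd := hB.posSemidef.mul_mul_conjTranspose_same S
    rw [hS.eq] at hpsd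
    exact hpsd.posDef_iff_det_ne_zero.mpr (hdet ▸ (mul_pos hL.det_pos hB.det_pos).ne')
  have key := hSBS.log_det_le_trace_sub_card
  rwa [hdet, Real.log_mul hL.det_pos.ne' hB.det_pos.ne', trace_mul_cycle, hSS] at key

lemma transpose_mul_diagonal_mul_eq_sum_vecMulVec {κ R : Type*} [CommSemiring R]
    (A : Matrix ι κ R) (x : ι → R) :
    Aᵀ * diagonal x * A = ∑ i, x i • vecMulVec (A i) (A i) := by
  ext j k
  simp [mul_apply, diagonal_apply, vecMulVec_apply, sum_apply, mul_comm, mul_left_comm]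

end Matrix

lemma sum_mul_le_of_mem_box {ι : Type*} [Fintype ι] {l u x lam θ : ι → ℝ} (ν : ℝ)
    (hx : ∀ i, l i ≤ x i ∧ x i ≤ u i) (hlam : ∀ i, 0 ≤ lam i) (hθ : ∀ i, 0 ≤ θ i) :
    ∑ i, x i * (lam i - θ i + ν) ≤
      (∑ i, lam i * u i) - (∑ i, θ i * l i) + ν * ∑ i, x i := by
  have hsplit : ∑ i, x i * (lam i - θ i + ν)
      = (∑ i, lam i * x i) - (∑ i, θ i * x i) + ν * ∑ i, x i := by
    rw [Finset.mul_sum, ← Finset.sum_sub_distrib, ← Finset.sum_add_distrib]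
    exact Finset.sum_congr rfl fun i _ => by ring
  have hupper : ∑ i, lam i * x i ≤ ∑ i, lam i * u i :=
    Finset.sum_le_sum fun i _ => mul_le_mul_of_nonneg_left (hx i).2 (hlam i)
  have hlower : ∑ i, θ i * l i ≤ ∑ i, θ i * x i :=
    Finset.sum_le_sum fun i _ => mul_le_mul_of_nonneg_left (hx i).1 (hθ i)
  linarith

theorem weak_duality_dopt
    (n m : ℕ) (A : Matrix (Fin n) (Fin m) ℝ) (l u x : Fin n → ℝ) (s : ℝ)
    (hfeas : (∑ i, x i) = s ∧ ∀ i, l i ≤ x i ∧ x i ≤ u i)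
    (hpd : (A.transpose * Matrix.diagonal x * A).PosDef)
    (Λ : Matrix (Fin m) (Fin m) ℝ) (lam θ : Fin n → ℝ) (ν : ℝ)
    (hΛ : Λ.PosDef) (hlam : ∀ i, 0 ≤ lam i) (hθ : ∀ i, 0 ≤ θ i)
    (hdualc : ∀ i : Fin n,
      (Λ.transpose * Matrix.vecMulVec (A i) (A i)).trace - lam i + θ i - ν = 0) :
    Real.log (A.transpose * Matrix.diagonal x * A).det ≤
      -Real.log Λ.det + (∑ i, lam i * u i) - (∑ i, θ i * l i) + ν * s - m := by
  have hΛsymm : Λ.transpose = Λ := hΛ.isHermitian.eq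
  have htrace : (Λ * (A.transpose * Matrix.diagonal x * A)).trace
      = ∑ i, x i * (lam i - θ i + ν) := by
    rw [Matrix.transpose_mul_diagonal_mul_eq_sum_vecMulVec, Finset.mul_sum, Matrix.trace_sum]
    refine Finset.sum_congr rfl fun i _ => ?_
    rw [mul_smul_comm, Matrix.trace_smul, smul_eq_mul, ← hΛsymm]
    congr 1
    linarith [hdualc i]
  have hlogdet := hΛ.log_det_add_log_det_le_trace_mul_sub_card hpd
  have hbox := sum_mul_le_of_mem_box ν hfeas.2 hlam hθ
  rw [htrace, Fintype.card_fin] at hlogdet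
  rw [hfeas.1] at hbox
  linarith
end

section
/- Rank-one SVD update identity: Let A = U Σ V^T with U ∈ R^{s×m} having orthonormal columns, Σ ∈ R^{m×m}, V ∈ R^{m×m} orthogonal. Let e_φ ∈ R^s be a standard basis vector, w ∈ R^m, p = (I − U U^T) e_φ with p ≠ 0, and K = [Σ V^T + U^T e_φ w^T ; ‖p‖ w^T] ∈ R^{(m+1)×m}. If K = Ũ Σ̃ Ṽ^T is an SVD of K, then A + e_φ w^T = ([U, p/‖p‖] Ũ) Σ̃ Ṽ^T, and moreover [U, p/‖p‖] has orthonormal columns. -/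
/-!
Write `p = e - U Uᵀ e`. Appending the unit column `p / ‖p‖` to `U` keeps the columns
orthonormal because `Uᵀ p = 0`, and the block product `[U, p/‖p‖] K` equals
`U Σ Vᵀ + (U Uᵀ e) wᵀ + p wᵀ = A + e wᵀ`. Substituting the SVD of `K` is then
associativity.
-/

open scoped Matrix

namespace Matrix

variable {l m n k ι R : Type*}

theorem mulVec_sub_mulVec_mulVec_eq_zero [Fintype l] [Fintype n] [DecidableEq n] [CommRing R]
    {B : Matrix n l R} {U : Matrix l n R} (hBU : B * U = 1) (x : l → R) :
    B *ᵥ (x - U *ᵥ (B *ᵥ x)) = 0 := by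
  rw [mulVec_sub, mulVec_mulVec, hBU, one_mulVec, sub_self]

theorem dotProduct_self_pos [Fintype n] [Ring R] [LinearOrder R] [IsStrictOrderedRing R]
    {v : n → R} (hv : v ≠ 0) : 0 < v ⬝ᵥ v :=
  lt_of_le_of_ne (Finset.sum_nonneg fun _ _ => mul_self_nonneg _)
    (Ne.symm (dotProduct_self_eq_zero.not.mpr hv))

theorem mul_replicateCol [Fintype l] [NonUnitalNonAssocSemiring R]
    (A : Matrix n l R) (v : l → R) :
    A * replicateCol ι v = replicateCol ι (A *ᵥ v) := by
  ext
  rfl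

theorem transpose_fromCols_mul_fromCols_eq_one [Fintype l] [Fintype n] [Fintype k]
    [DecidableEq n] [DecidableEq k] [CommSemiring R]
    {A : Matrix l n R} {B : Matrix l k R} (hA : Aᵀ * A = 1) (hB : Bᵀ * B = 1)
    (hAB : Aᵀ * B = 0) :
    (fromCols A B)ᵀ * fromCols A B = 1 := by
  have hBA : Bᵀ * A = 0 := by
    rw [← transpose_transpose (Bᵀ * A), transpose_mul, transpose_transpose, hAB, transpose_zero]
  rw [transpose_fromCols, fromRows_mul_fromCols, hA, hB, hAB, hBA, fromBlocks_one]

theorem transpose_replicateCol_div_sqrt_mul_self_eq_one [Fintype l] [Unique ι] [DecidableEq ι]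
    {p : l → ℝ} (hp : p ≠ 0) :
    (replicateCol ι fun i => p i / √(p ⬝ᵥ p))ᵀ *
      replicateCol ι (fun i => p i / √(p ⬝ᵥ p)) = 1 := by
  have hpp : 0 < p ⬝ᵥ p := dotProduct_self_pos hp
  rw [transpose_replicateCol, replicateRow_mul_replicateCol]
  ext i j
  rw [Subsingleton.elim i j, one_apply_eq, of_apply]
  simp only [dotProduct, div_mul_div_comm, ← Finset.sum_div]
  rw [← dotProduct, Real.mul_self_sqrt hpp.le, div_self hpp.ne']

theorem fromCols_mul_fromRows_rank_one_update [Fintype m] [Fintype n] [Unique ι] [Field R]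
    (U : Matrix l n R) (M : Matrix n m R) (x : l → R) (y : n → R) (w : m → R) {c : R}
    (hc : c ≠ 0) :
    fromCols U (replicateCol ι fun i => (x - U *ᵥ y) i / c) *
        fromRows (M + vecMulVec y w) (replicateRow ι fun j => c * w j) =
      U * M + vecMulVec x w := by
  have hcol : replicateCol ι (fun i => (x - U *ᵥ y) i / c) * replicateRow ι (fun j => c * w j) =
      vecMulVec (x - U *ᵥ y) w := by
    rw [← vecMulVec_eq]
    ext
    simp only [vecMulVec_apply]
    field_simp
  rw [fromCols_mul_fromRows, Matrix.mul_add, mul_vecMulVec, hcol, add_assoc, ← add_vecMulVec,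
    add_sub_cancel]

end Matrix

open Matrix

theorem svd_rank_one_update_general (s m : ℕ)
    (A U : Matrix (Fin s) (Fin m) ℝ) (Sm V : Matrix (Fin m) (Fin m) ℝ)
    (hU : U.transpose * U = 1)
    (hA : A = U * Sm * V.transpose)
    (w : Fin m → ℝ)
    (eφ : Fin s → ℝ)
    (p : Fin s → ℝ) (hp : p = eφ - U *ᵥ (U.transpose *ᵥ eφ))
    (hp0 : p ≠ 0)
    (np : ℝ) (hnp : np = Real.sqrt (p ⬝ᵥ p))
    (K : Matrix (Fin m ⊕ Fin 1) (Fin m) ℝ)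
    (hK : K = Matrix.fromRows
      (Sm * V.transpose + Matrix.vecMulVec (U.transpose *ᵥ eφ) w)
      (Matrix.of fun (_ : Fin 1) j => np * w j))
    (Ut : Matrix (Fin m ⊕ Fin 1) (Fin m ⊕ Fin 1) ℝ)
    (St : Matrix (Fin m ⊕ Fin 1) (Fin m) ℝ)
    (Vt : Matrix (Fin m) (Fin m) ℝ)
    (hKsvd : K = Ut * St * Vt.transpose)
    (W : Matrix (Fin s) (Fin m ⊕ Fin 1) ℝ)
    (hW : W = Matrix.fromCols U (Matrix.of fun i (_ : Fin 1) => p i / np)) :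
    A + Matrix.vecMulVec eφ w = (W * Ut) * St * Vt.transpose ∧
    W.transpose * W = 1 := by
  have hnp0 : np ≠ 0 := hnp ▸ Real.sqrt_ne_zero'.mpr (dotProduct_self_pos hp0)
  have hUp : Uᵀ *ᵥ p = 0 := hp ▸ mulVec_sub_mulVec_mulVec_eq_zero hU eφ
  have hWK : W * K = A + vecMulVec eφ w := by
    rw [hW, hK, hA, Matrix.mul_assoc, hp]
    exact fromCols_mul_fromRows_rank_one_update U _ eφ _ w hnp0
  have hcol : Uᵀ * replicateCol (Fin 1) (fun i => p i / np) = 0 := by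
    rw [mul_replicateCol, show (fun i => p i / np) = np⁻¹ • p by ext; simp [div_eq_inv_mul],
      mulVec_smul, hUp, smul_zero, replicateCol_zero]
  refine ⟨by rw [← hWK, hKsvd]; simp only [Matrix.mul_assoc], ?_⟩
  exact hW ▸ transpose_fromCols_mul_fromCols_eq_one hU
    (hnp ▸ transpose_replicateCol_div_sqrt_mul_self_eq_one hp0) hcol

theorem svd_rank_one_update (s m : ℕ)
    (A U : Matrix (Fin s) (Fin m) ℝ) (Sm V : Matrix (Fin m) (Fin m) ℝ)
    (hU : U.transpose * U = 1) (hV : V.transpose * V = 1)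
    (hA : A = U * Sm * V.transpose)
    (φ : Fin s) (w : Fin m → ℝ)
    (eφ : Fin s → ℝ) (heφ : eφ = fun i => if i = φ then 1 else 0)
    (p : Fin s → ℝ) (hp : p = eφ - U *ᵥ (U.transpose *ᵥ eφ))
    (hp0 : p ≠ 0)
    (np : ℝ) (hnp : np = Real.sqrt (p ⬝ᵥ p))
    (K : Matrix (Fin m ⊕ Fin 1) (Fin m) ℝ)
    (hK : K = Matrix.fromRows
      (Sm * V.transpose + Matrix.vecMulVec (U.transpose *ᵥ eφ) w)
      (Matrix.of fun (_ : Fin 1) j => np * w j))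
    (Ut : Matrix (Fin m ⊕ Fin 1) (Fin m ⊕ Fin 1) ℝ)
    (St : Matrix (Fin m ⊕ Fin 1) (Fin m) ℝ)
    (Vt : Matrix (Fin m) (Fin m) ℝ)
    (hUt : Ut.transpose * Ut = 1) (hVt : Vt.transpose * Vt = 1)
    (hKsvd : K = Ut * St * Vt.transpose)
    (W : Matrix (Fin s) (Fin m ⊕ Fin 1) ℝ)
    (hW : W = Matrix.fromCols U (Matrix.of fun i (_ : Fin 1) => p i / np)) :
    A + Matrix.vecMulVec eφ w = (W * Ut) * St * Vt.transpose ∧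
    W.transpose * W = 1 :=
  svd_rank_one_update_general s m A U Sm V hU hA w eφ p hp hp0 np hnp K hK Ut St Vt hKsvd W hW
end

section
/- Hadamard-type bound: for any x ∈ {0,1}^n with e^T x = s and matrix A with rows v_1^T,...,v_n^T such that A^T diag(x) A is positive definite, log det(Σ_ℓ x_ℓ v_ℓ v_ℓ^T) ≤ Σ_{ℓ=1}^{s} log(1 + φ_ℓ^2(A)), where φ_ℓ(A) is the ℓ-th greatest Euclidean norm among the rows of A. -/
/-!
Write `∑ ℓ, x ℓ • v_ℓ v_ℓᵀ = BᵀB` with `B = diag(√x) A`. Then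
`det (BᵀB) ≤ det (1 + BᵀB) = det (1 + BBᵀ)`, and Hadamard's inequality bounds the latter by the
product of its diagonal entries `1 + x ℓ ‖v_ℓ‖²`. Only the `s` rows with `x ℓ = 1` contribute, and
the sum of `log (1 + ‖v_ℓ‖²)` over any `s` rows is at most the sum over the `s` longest ones.

Hadamard's inequality itself follows by rescaling to unit diagonal, where `t ≤ exp (t - 1)`
applied to the eigenvalues gives `det ≤ exp (trace - card) = 1`.
-/

open scoped Matrix
open Matrix Finset

theorem Fin.val_le_of_strictMono {k n : ℕ} {g : Fin k → Fin n} (hg : StrictMono g) (i : Fin k) :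
    (i : ℕ) ≤ g i := by
  have : ((Iic i).map ⟨g, hg.injective⟩).card ≤ (Iic (g i)).card :=
    card_le_card fun _ hj => by
      obtain ⟨j, hji, rfl⟩ := mem_map.mp hj
      exact mem_Iic.mpr (hg.monotone (mem_Iic.mp hji))
  simpa using this

theorem Fin.sum_le_sum_filter_val_lt_card {α : Type*} [AddCommMonoid α] [PartialOrder α]
    [IsOrderedAddMonoid α] {n : ℕ} {f : Fin n → α} (hf : Antitone f) (T : Finset (Fin n)) :
    ∑ i ∈ T, f i ≤ ∑ i with i.val < #T, f i := by
  have hT : #T ≤ n := by simpa using T.card_le_univ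
  have hfirst : ({i | i.val < #T} : Finset (Fin n)) = univ.map (Fin.castLEEmb hT) := by
    ext i
    simp only [mem_filter, mem_univ, true_and, mem_map]
    exact ⟨fun hi => ⟨⟨i, hi⟩, rfl⟩, by rintro ⟨j, rfl⟩; exact j.2⟩
  conv_lhs => rw [← T.map_orderEmbOfFin_univ rfl]
  rw [hfirst, sum_map, sum_map]
  exact sum_le_sum fun i _ => hf (Fin.val_le_of_strictMono (T.orderEmbOfFin rfl).strictMono i)

namespace Matrix

variable {ι : Type*} [Fintype ι] [DecidableEq ι]

theorem PosSemidef.det_le_exp_trace_sub_card {K : Matrix ι ι ℝ} (hK : K.PosSemidef) :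
    K.det ≤ Real.exp (K.trace - Fintype.card ι) := by
  rw [hK.1.det_eq_prod_eigenvalues, hK.1.trace_eq_sum_eigenvalues]
  simp only [RCLike.ofReal_real_eq_id, id]
  calc ∏ i, hK.1.eigenvalues i ≤ ∏ i, Real.exp (hK.1.eigenvalues i - 1) :=
        prod_le_prod (fun i _ => hK.eigenvalues_nonneg i)
          fun i _ => by linarith [Real.add_one_le_exp (hK.1.eigenvalues i - 1)]
    _ = Real.exp (∑ i, hK.1.eigenvalues i - Fintype.card ι) := by
        rw [← Real.exp_sum, sum_sub_distrib]; simp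

theorem PosSemidef.det_le_prod_diag {N : Matrix ι ι ℝ} (hN : N.PosSemidef)
    (hdiag : ∀ i, 0 < N i i) : N.det ≤ ∏ i, N i i := by
  set c : ι → ℝ := fun i => (√(N i i))⁻¹
  have hc : ∀ i, c i * N i i * c i = 1 := fun i => by
    rw [mul_right_comm, ← mul_inv, Real.mul_self_sqrt (hdiag i).le, inv_mul_cancel₀ (hdiag i).ne']
  set K := diagonal c * N * diagonal c
  have hK : K.PosSemidef := by
    simpa using hN.mul_mul_conjTranspose_same (diagonal c)
  have htrace : K.trace = Fintype.card ι := by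
    simp [K, trace, mul_diagonal, diagonal_mul, hc]
  have hdet : K.det * ∏ i, N i i = N.det := by
    calc K.det * ∏ i, N i i = N.det * ∏ i, c i * N i i * c i := by
          simp only [K, det_mul, det_diagonal, prod_mul_distrib]; ring
      _ = N.det := by simp [hc]
  calc N.det = K.det * ∏ i, N i i := hdet.symm
    _ ≤ Real.exp (K.trace - Fintype.card ι) * ∏ i, N i i :=
        mul_le_mul_of_nonneg_right hK.det_le_exp_trace_sub_card
          (prod_nonneg fun i _ => (hdiag i).le)
    _ = ∏ i, N i i := by simp [htrace]

theorem PosSemidef.det_le_det_one_add {M : Matrix ι ι ℝ} (hM : M.PosSemidef) :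
    M.det ≤ (1 + M).det := by
  have hH := hM.1
  rw [hH.spectral_theorem, ← map_one (Unitary.conjStarAlgAut ℝ _ hH.eigenvectorUnitary), ← map_add,
    det_map', det_map', ← diagonal_one, diagonal_add, det_diagonal, det_diagonal]
  exact prod_le_prod (fun i _ => hM.eigenvalues_nonneg i) fun i _ => by simp

variable {κ : Type*}

theorem dotProduct_self_nonneg {R : Type*} [Ring R] [LinearOrder R] [IsStrictOrderedRing R]
    [Fintype κ] (v : κ → R) : 0 ≤ v ⬝ᵥ v :=
  sum_nonneg fun _ _ => mul_self_nonneg _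

theorem sum_smul_vecMulVec_self_eq {w : ι → ℝ} (hw : ∀ ℓ, 0 ≤ w ℓ) (A : Matrix ι κ ℝ) :
    ∑ ℓ, w ℓ • vecMulVec (A ℓ) (A ℓ) =
      (diagonal (fun ℓ => √(w ℓ)) * A)ᵀ * (diagonal (fun ℓ => √(w ℓ)) * A) := by
  rw [transpose_mul, diagonal_transpose, Matrix.mul_assoc, ← Matrix.mul_assoc (diagonal _),
    diagonal_mul_diagonal]
  ext i j
  rw [mul_apply]
  simp only [sum_apply, smul_apply, vecMulVec_apply, smul_eq_mul, transpose_apply,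
    diagonal_mul, Real.mul_self_sqrt (hw _)]
  exact sum_congr rfl fun ℓ _ => by ring

theorem det_sum_smul_vecMulVec_self_le [Fintype κ] [DecidableEq κ] {w : ι → ℝ}
    (hw : ∀ ℓ, 0 ≤ w ℓ) (A : Matrix ι κ ℝ) :
    (∑ ℓ, w ℓ • vecMulVec (A ℓ) (A ℓ)).det ≤ ∏ ℓ, (1 + w ℓ * (A ℓ ⬝ᵥ A ℓ)) := by
  set B := diagonal (fun ℓ => √(w ℓ)) * A
  have hBBt : ∀ ℓ, (B * Bᵀ) ℓ ℓ = w ℓ * (A ℓ ⬝ᵥ A ℓ) := fun ℓ => by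
    rw [mul_apply]
    simp only [B, transpose_apply, diagonal_mul, dotProduct, mul_sum]
    exact sum_congr rfl fun j _ => by rw [mul_mul_mul_comm, Real.mul_self_sqrt (hw ℓ)]
  have hpsd : (1 + B * Bᵀ).PosSemidef := by
    refine (PosDef.one.add_posSemidef ?_).posSemidef
    rw [← conjTranspose_eq_transpose_of_trivial]
    exact posSemidef_self_mul_conjTranspose B
  rw [sum_smul_vecMulVec_self_eq hw]
  calc (Bᵀ * B).det ≤ (1 + Bᵀ * B).det := by
        refine PosSemidef.det_le_det_one_add ?_
        rw [← conjTranspose_eq_transpose_of_trivial]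
        exact posSemidef_conjTranspose_mul_self B
    _ = (1 + B * Bᵀ).det := det_one_add_mul_comm _ _
    _ ≤ ∏ ℓ, ((1 : Matrix ι ι ℝ) + B * Bᵀ) ℓ ℓ := hpsd.det_le_prod_diag fun ℓ => by
        rw [add_apply, one_apply_eq, hBBt]
        have := mul_nonneg (hw ℓ) (dotProduct_self_nonneg (A ℓ))
        linarith
    _ = ∏ ℓ, (1 + w ℓ * (A ℓ ⬝ᵥ A ℓ)) := by simp only [add_apply, one_apply_eq, hBBt]

theorem log_det_sum_smul_vecMulVec_self_le [Fintype κ] [DecidableEq κ] {w : ι → ℝ}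
    (hw : ∀ ℓ, 0 ≤ w ℓ) (A : Matrix ι κ ℝ) :
    Real.log (∑ ℓ, w ℓ • vecMulVec (A ℓ) (A ℓ)).det ≤
      ∑ ℓ, Real.log (1 + w ℓ * (A ℓ ⬝ᵥ A ℓ)) := by
  have hone : ∀ ℓ, 1 ≤ 1 + w ℓ * (A ℓ ⬝ᵥ A ℓ) := fun ℓ =>
    le_add_of_nonneg_right (mul_nonneg (hw ℓ) (dotProduct_self_nonneg (A ℓ)))
  have hpsd : (∑ ℓ, w ℓ • vecMulVec (A ℓ) (A ℓ)).PosSemidef := by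
    rw [sum_smul_vecMulVec_self_eq hw, ← conjTranspose_eq_transpose_of_trivial]
    exact posSemidef_conjTranspose_mul_self _
  rcases hpsd.det_nonneg.eq_or_lt with hzero | hpos
  · rw [← hzero, Real.log_zero]
    exact sum_nonneg fun ℓ _ => Real.log_nonneg (hone ℓ)
  · rw [← Real.log_prod fun ℓ _ => (zero_lt_one.trans_le (hone ℓ)).ne']
    exact Real.log_le_log hpos (det_sum_smul_vecMulVec_self_le hw A)

end Matrix

theorem hadamard_bound_general (n m s : ℕ)
    (A : Matrix (Fin n) (Fin m) ℝ)
    (x : Fin n → ℝ) (hx01 : ∀ ℓ, x ℓ = 0 ∨ x ℓ = 1)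
    (hxs : (∑ ℓ, x ℓ) = s)
    (φ : Fin n → ℝ) (π : Equiv.Perm (Fin n))
    (hφdec : Antitone φ)
    (hφ : ∀ ℓ, φ ℓ = Real.sqrt (A (π ℓ) ⬝ᵥ A (π ℓ))) :
    Real.log (∑ ℓ : Fin n, x ℓ • Matrix.vecMulVec (A ℓ) (A ℓ)).det ≤
      ∑ ℓ : Fin n, if (ℓ : ℕ) < s then Real.log (1 + φ ℓ ^ 2) else 0 := by
  set T : Finset (Fin n) := {ℓ | x (π ℓ) = 1}
  have hx : ∀ ℓ, x (π ℓ) = if ℓ ∈ T then 1 else 0 := fun ℓ => by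
    rcases hx01 (π ℓ) with h | h <;> simp [T, h]
  have hT : #T = s := by
    rw [← Nat.cast_inj (R := ℝ), ← hxs, ← Equiv.sum_comp π, sum_congr rfl fun ℓ _ => hx ℓ]
    simp
  have hφsq : ∀ ℓ, φ ℓ ^ 2 = A (π ℓ) ⬝ᵥ A (π ℓ) := fun ℓ => by
    rw [hφ, Real.sq_sqrt (dotProduct_self_nonneg _)]
  have hanti : Antitone fun ℓ => Real.log (1 + φ ℓ ^ 2) := fun a b hab => by
    have hφb : 0 ≤ φ b := by rw [hφ]; exact Real.sqrt_nonneg _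
    exact Real.log_le_log (by positivity) (by gcongr; exact hφdec hab)
  calc Real.log (∑ ℓ, x ℓ • vecMulVec (A ℓ) (A ℓ)).det
      ≤ ∑ ℓ, Real.log (1 + x ℓ * (A ℓ ⬝ᵥ A ℓ)) :=
        log_det_sum_smul_vecMulVec_self_le (fun ℓ => by rcases hx01 ℓ with h | h <;> simp [h]) A
    _ = ∑ ℓ ∈ T, Real.log (1 + φ ℓ ^ 2) := by
        rw [← Equiv.sum_comp π, sum_filter]
        refine sum_congr rfl fun ℓ _ => ?_
        by_cases hℓ : ℓ ∈ T <;> simp [hx, hℓ, hφsq]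
    _ ≤ ∑ ℓ with ℓ.val < #T, Real.log (1 + φ ℓ ^ 2) := Fin.sum_le_sum_filter_val_lt_card hanti T
    _ = ∑ ℓ : Fin n, if (ℓ : ℕ) < s then Real.log (1 + φ ℓ ^ 2) else 0 := by rw [hT, sum_filter]

theorem hadamard_bound (n m s : ℕ) (hsn : s ≤ n)
    (A : Matrix (Fin n) (Fin m) ℝ)
    (x : Fin n → ℝ) (hx01 : ∀ ℓ, x ℓ = 0 ∨ x ℓ = 1)
    (hxs : (∑ ℓ, x ℓ) = s)
    (hpd : (A.transpose * Matrix.diagonal x * A).PosDef)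
    (φ : Fin n → ℝ) (π : Equiv.Perm (Fin n))
    (hφdec : Antitone φ)
    (hφ : ∀ ℓ, φ ℓ = Real.sqrt (A (π ℓ) ⬝ᵥ A (π ℓ))) :
    Real.log (∑ ℓ : Fin n, x ℓ • Matrix.vecMulVec (A ℓ) (A ℓ)).det ≤
      ∑ ℓ : Fin n, if (ℓ : ℕ) < s then Real.log (1 + φ ℓ ^ 2) else 0 :=
  hadamard_bound_general n m s A x hx01 hxs φ π hφdec hφ
end

section
/- Spectral bound: for any x ∈ {0,1}^n with e^T x = s and matrix A with rows v_1^T,...,v_n^T such that A^T diag(x) A is positive definite, log det(Σ_ℓ x_ℓ v_ℓ v_ℓ^T) ≤ Σ_{ℓ=1}^{s} log(1 + σ_ℓ^2(A)), where σ_ℓ(A) denotes the ℓ-th greatest singular value of A (with σ_ℓ(A) := 0 for ℓ > m). -/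
/-!
Write `D = diag x`. Since `0 ≤ x ≤ 1`, `Aᵀ A - Aᵀ D A = Aᵀ (1 - D) A` is positive semidefinite,
and adding a positive semidefinite matrix to a positive definite one can only increase the
determinant (conjugate by `√(Aᵀ D A)` to reduce to `det (1 + M) ≥ 1`). Hence
`det (Aᵀ D A) ≤ det (Aᵀ A) = ∏_{j < m} σ_j² ≤ ∏_{j < m} (1 + σ_j²)`, using the SVD.
Positive definiteness also gives `m = rank (Aᵀ D A) ≤ rank D = s`, so the last sum runs over
indices `< s`, and the remaining terms `log (1 + σ_ℓ²)` with `m ≤ ℓ < s` are nonnegative.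
-/

open scoped Matrix
open Matrix

namespace Matrix

section

variable {ι : Type*} [Fintype ι] [DecidableEq ι]

lemma PosSemidef.one_le_det_one_add {M : Matrix ι ι ℝ} (hM : M.PosSemidef) :
    1 ≤ (1 + M).det := by
  set W := hM.1.eigenvectorUnitary
  have hWW : (W : Matrix ι ι ℝ) * star (W : Matrix ι ι ℝ) = 1 := mem_unitaryGroup_iff.mp W.2
  have hdiag : 1 + M =
      (W : Matrix ι ι ℝ) * diagonal (fun i ↦ 1 + hM.1.eigenvalues i) * star (W : Matrix ι ι ℝ) := by
    have : diagonal (fun i ↦ 1 + hM.1.eigenvalues i) =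
        1 + diagonal (RCLike.ofReal ∘ hM.1.eigenvalues) := by
      rw [← diagonal_one, diagonal_add]; rfl
    conv_lhs => rw [hM.1.spectral_theorem]
    rw [this, mul_add, add_mul, mul_one, hWW, Unitary.conjStarAlgAut_apply]
  rw [hdiag, det_conj_of_mul_eq_one hWW (mem_unitaryGroup_iff'.mp W.2), det_diagonal]
  exact Finset.one_le_prod fun i _ ↦ le_add_of_nonneg_right (hM.eigenvalues_nonneg i)

open scoped MatrixOrder in
lemma PosDef.det_le_det_add {B P : Matrix ι ι ℝ} (hB : B.PosDef) (hP : P.PosSemidef) :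
    B.det ≤ (B + P).det := by
  set R := CFC.sqrt B
  have hRR : R * R = B := CFC.sqrt_mul_sqrt_self B hB.posSemidef.nonneg
  have hdet : B.det = R.det * R.det := by rw [← hRR, det_mul]
  have hR : IsUnit R.det := isUnit_iff_ne_zero.2 fun h ↦ hB.det_pos.ne' (by rw [hdet, h, zero_mul])
  have hRsymm : R⁻¹ᴴ = R⁻¹ := ((CFC.sqrt_nonneg B).posSemidef.isHermitian.inv).eq
  have hconj : B + P = R * (1 + R⁻¹ * P * R⁻¹) * R := by
    rw [mul_add, mul_one, add_mul, hRR]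
    simp only [← Matrix.mul_assoc, mul_nonsing_inv R hR, one_mul]
    rw [Matrix.mul_assoc, nonsing_inv_mul R hR, mul_one]
  have hone : 1 ≤ (1 + R⁻¹ * P * R⁻¹).det := by
    refine PosSemidef.one_le_det_one_add ?_
    simpa only [hRsymm] using hP.conjTranspose_mul_mul_same R⁻¹
  rw [hconj, det_mul, det_mul, hdet]
  nlinarith [hB.det_pos]

end

lemma sum_smul_vecMulVec_eq_transpose_mul_diagonal_mul {ι κ R : Type*} [Fintype ι]
    [DecidableEq ι] [CommSemiring R] (A : Matrix ι κ R) (x : ι → R) :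
    ∑ ℓ, x ℓ • vecMulVec (A ℓ) (A ℓ) = Aᵀ * diagonal x * A := by
  ext i j
  rw [sum_apply, mul_apply]
  simp only [smul_apply, vecMulVec_apply, mul_diagonal, transpose_apply, smul_eq_mul]
  exact Finset.sum_congr rfl fun ℓ _ ↦ by ring

lemma card_le_rank_of_isUnit_mul_mul {ι κ R : Type*} [Fintype ι] [Fintype κ] [DecidableEq κ]
    [CommRing R] [StrongRankCondition R] {M : Matrix κ ι R} {D : Matrix ι ι R}
    {N : Matrix ι κ R} (h : IsUnit (M * D * N)) : Fintype.card κ ≤ D.rank :=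
  calc Fintype.card κ = (M * D * N).rank := (rank_of_isUnit _ h).symm
    _ ≤ (M * D).rank := rank_mul_le_left _ _
    _ ≤ D.rank := rank_mul_le_right _ _

lemma card_ne_zero_eq_sum_of_forall_eq_zero_or_eq_one {ι R : Type*} [Fintype ι] [Semiring R]
    [DecidableEq R] {x : ι → R} (hx : ∀ i, x i = 0 ∨ x i = 1) :
    (Fintype.card {i // x i ≠ 0} : R) = ∑ i, x i := by
  rw [Fintype.card_subtype, Finset.card_filter, Nat.cast_sum]
  refine Finset.sum_congr rfl fun i _ ↦ ?_
  rcases hx i with h | h <;> by_cases h1 : x i = 0 <;> simp_all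

lemma transpose_mul_self_eq_of_eq_mul_mul_transpose {ι κ R : Type*} [Fintype ι] [Fintype κ]
    [DecidableEq ι] [CommSemiring R] {A S : Matrix ι κ R} {U : Matrix ι ι R} {V : Matrix κ κ R}
    (hU : Uᵀ * U = 1) (hA : A = U * S * Vᵀ) : Aᵀ * A = V * (Sᵀ * S) * Vᵀ := by
  rw [hA]
  simp only [transpose_mul, transpose_transpose, Matrix.mul_assoc]
  rw [← Matrix.mul_assoc Uᵀ, hU, Matrix.one_mul]

lemma det_mul_mul_transpose_of_transpose_mul_self_eq_one {κ R : Type*} [Fintype κ]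
    [DecidableEq κ] [CommRing R] {V : Matrix κ κ R} (hV : Vᵀ * V = 1) (X : Matrix κ κ R) :
    (V * X * Vᵀ).det = X.det :=
  det_conj_of_mul_eq_one (mul_eq_one_comm.mp hV) hV

lemma of_ite_val_eq_submatrix_diagonal {R : Type*} [Zero R] {m n : ℕ} (h : m ≤ n)
    (σ : Fin n → R) :
    (of fun (i : Fin n) (j : Fin m) ↦ if (i : ℕ) = (j : ℕ) then σ i else 0) =
      (diagonal σ).submatrix id (Fin.castLE h) := by
  ext i j
  simp [diagonal_apply, Fin.ext_iff]

lemma det_transpose_mul_self_submatrix_diagonal {R : Type*} [CommRing R] {m n : ℕ}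
    (h : m ≤ n) (σ : Fin n → R) :
    (((diagonal σ).submatrix id (Fin.castLE h))ᵀ * (diagonal σ).submatrix id (Fin.castLE h)).det =
      ∏ j, σ (Fin.castLE h j) ^ 2 := by
  rw [transpose_submatrix, diagonal_transpose, ← submatrix_mul _ _ _ _ _ Function.bijective_id,
    diagonal_mul_diagonal, submatrix_diagonal _ _ (Fin.castLE_injective h), det_diagonal]
  simp only [Function.comp_apply, sq]

lemma det_transpose_mul_diagonal_mul_le {ι κ : Type*} [Fintype ι] [Fintype κ] [DecidableEq ι]
    [DecidableEq κ] {A : Matrix ι κ ℝ} {x : ι → ℝ} (hx : ∀ i, x i ≤ 1)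
    (hpd : (Aᵀ * diagonal x * A).PosDef) : (Aᵀ * diagonal x * A).det ≤ (Aᵀ * A).det := by
  have hrest : (Aᵀ * diagonal (fun i ↦ 1 - x i) * A).PosSemidef := by
    simpa using
      (posSemidef_diagonal_iff.2 fun i ↦ sub_nonneg.2 (hx i)).conjTranspose_mul_mul_same A
  calc (Aᵀ * diagonal x * A).det
      ≤ (Aᵀ * diagonal x * A + Aᵀ * diagonal (fun i ↦ 1 - x i) * A).det :=
        hpd.det_le_det_add hrest
    _ = (Aᵀ * A).det := by
        rw [← Matrix.add_mul, ← Matrix.mul_add, diagonal_add]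
        simp

end Matrix

lemma Fin.sum_castLE_le_sum_ite_lt {M : Type*} [AddCommMonoid M] [PartialOrder M]
    [IsOrderedAddMonoid M] {m n s : ℕ} (hmn : m ≤ n) (hms : m ≤ s) {f : Fin n → M}
    (hf : ∀ i, 0 ≤ f i) :
    ∑ j : Fin m, f (Fin.castLE hmn j) ≤ ∑ ℓ : Fin n, if (ℓ : ℕ) < s then f ℓ else 0 := by
  rw [← Finset.sum_filter]
  calc ∑ j : Fin m, f (Fin.castLE hmn j) = ∑ ℓ ∈ Finset.univ.map (Fin.castLEEmb hmn), f ℓ :=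
        (Finset.sum_map Finset.univ (Fin.castLEEmb hmn) f).symm
    _ ≤ _ := Finset.sum_le_sum_of_subset_of_nonneg ?_ fun i _ _ ↦ hf i
  intro i hi
  simp only [Finset.mem_map, Finset.mem_univ, true_and, Finset.mem_filter] at hi ⊢
  obtain ⟨j, rfl⟩ := hi
  exact j.isLt.trans_le hms

theorem spectral_bound_general (n m s : ℕ)
    (A : Matrix (Fin n) (Fin m) ℝ)
    (x : Fin n → ℝ) (hx01 : ∀ ℓ, x ℓ = 0 ∨ x ℓ = 1)
    (hxs : (∑ ℓ, x ℓ) = s)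
    (hpd : (A.transpose * Matrix.diagonal x * A).PosDef)
    (σ : Fin n → ℝ)
    (U : Matrix (Fin n) (Fin n) ℝ) (V : Matrix (Fin m) (Fin m) ℝ)
    (hU : U.transpose * U = 1) (hV : V.transpose * V = 1)
    (hsvd : A = U * (Matrix.of fun (i : Fin n) (j : Fin m) =>
      if (i : ℕ) = (j : ℕ) then σ i else 0) * V.transpose) :
    Real.log (∑ ℓ : Fin n, x ℓ • Matrix.vecMulVec (A ℓ) (A ℓ)).det ≤
      ∑ ℓ : Fin n, if (ℓ : ℕ) < s then Real.log (1 + σ ℓ ^ 2) else 0 := by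
  classical
  have hrank : m ≤ (diagonal x).rank := by
    simpa using card_le_rank_of_isUnit_mul_mul hpd.isUnit
  have hmn : m ≤ n := hrank.trans (rank_le_width _)
  have hms : m ≤ s := by
    have hcard : Fintype.card {i // x i ≠ 0} = s := by
      exact_mod_cast (card_ne_zero_eq_sum_of_forall_eq_zero_or_eq_one hx01).trans hxs
    rwa [rank_diagonal, hcard] at hrank
  have hdet : (Aᵀ * diagonal x * A).det ≤ ∏ j, (1 + σ (Fin.castLE hmn j) ^ 2) :=
    calc (Aᵀ * diagonal x * A).det
        ≤ (Aᵀ * A).det := det_transpose_mul_diagonal_mul_le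
          (fun i ↦ (hx01 i).elim (fun h ↦ h ▸ zero_le_one) le_of_eq) hpd
      _ = ∏ j, σ (Fin.castLE hmn j) ^ 2 := by
        rw [transpose_mul_self_eq_of_eq_mul_mul_transpose hU hsvd,
          det_mul_mul_transpose_of_transpose_mul_self_eq_one hV,
          of_ite_val_eq_submatrix_diagonal hmn, det_transpose_mul_self_submatrix_diagonal]
      _ ≤ ∏ j, (1 + σ (Fin.castLE hmn j) ^ 2) :=
        Finset.prod_le_prod (fun _ _ ↦ sq_nonneg _) fun _ _ ↦ le_add_of_nonneg_left zero_le_one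
  calc Real.log (∑ ℓ, x ℓ • vecMulVec (A ℓ) (A ℓ)).det
      = Real.log (Aᵀ * diagonal x * A).det := by
        rw [sum_smul_vecMulVec_eq_transpose_mul_diagonal_mul]
    _ ≤ Real.log (∏ j, (1 + σ (Fin.castLE hmn j) ^ 2)) := Real.log_le_log hpd.det_pos hdet
    _ = ∑ j, Real.log (1 + σ (Fin.castLE hmn j) ^ 2) := Real.log_prod fun _ _ ↦ by positivity
    _ ≤ _ := Fin.sum_castLE_le_sum_ite_lt hmn hms fun _ ↦
        Real.log_nonneg (le_add_of_nonneg_right (sq_nonneg _))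

theorem spectral_bound (n m s : ℕ) (hmn : m ≤ n) (hsn : s ≤ n)
    (A : Matrix (Fin n) (Fin m) ℝ)
    (x : Fin n → ℝ) (hx01 : ∀ ℓ, x ℓ = 0 ∨ x ℓ = 1)
    (hxs : (∑ ℓ, x ℓ) = s)
    (hpd : (A.transpose * Matrix.diagonal x * A).PosDef)
    (σ : Fin n → ℝ) (hσdec : Antitone σ) (hσ0 : ∀ ℓ, 0 ≤ σ ℓ)
    (hσzero : ∀ ℓ : Fin n, m ≤ (ℓ : ℕ) → σ ℓ = 0)
    (U : Matrix (Fin n) (Fin n) ℝ) (V : Matrix (Fin m) (Fin m) ℝ)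
    (hU : U.transpose * U = 1) (hV : V.transpose * V = 1)
    (hsvd : A = U * (Matrix.of fun (i : Fin n) (j : Fin m) =>
      if (i : ℕ) = (j : ℕ) then σ i else 0) * V.transpose) :
    Real.log (∑ ℓ : Fin n, x ℓ • Matrix.vecMulVec (A ℓ) (A ℓ)).det ≤
      ∑ ℓ : Fin n, if (ℓ : ℕ) < s then Real.log (1 + σ ℓ ^ 2) else 0 :=
  spectral_bound_general n m s A x hx01 hxs hpd σ U V hU hV hsvd
end
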